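/- For ultrafilters on ω, the Rudin-Blass order implies the Rudin-Keisler order, and for P-points the two orders coincide: if 𝒰 and 𝒱 are P-points then 𝒰 ≤_RK 𝒱 if and only if 𝒰 ≤_RB 𝒱. -/
import Mathlib


/-- Rudin-Keisler reducibility. -/
def RKle (U V : Ultrafilter ℕ) : Prop :=
  ∃ f : ℕ → ℕ, ∀ a : Set ℕ, a ∈ U ↔ f ⁻¹' a ∈ V

/-- Rudin-Blass reducibility: as Rudin-Keisler, with a finite-to-one witness. -/
def RBle (U V : Ultrafilter ℕ) : Prop :=
  ∃ f : ℕ → ℕ, (∀ n : ℕ, (f ⁻¹' {n}).Finite) ∧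
    ∀ a : Set ℕ, a ∈ U ↔ f ⁻¹' a ∈ V

/-- `U` is a P-point: a non-principal ultrafilter on `ω` such that every
`f : ω → ω` is finite-to-one or constant on a set in `U`. -/
def IsPPoint (U : Ultrafilter ℕ) : Prop :=
  (U : Filter ℕ) ≤ Filter.cofinite ∧
  ∀ f : ℕ → ℕ, ∃ A ∈ U, (∀ n : ℕ, (A ∩ f ⁻¹' {n}).Finite) ∨ ∃ c, ∀ x ∈ A, f x = c

/-- The Rudin-Blass order implies the Rudin-Keisler order, and on P-points the
two orders coincide. -/
theorem rb_implies_rk_and_coincide_on_pPoints :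
    (∀ U V : Ultrafilter ℕ, RBle U V → RKle U V) ∧
    (∀ U V : Ultrafilter ℕ, IsPPoint U → IsPPoint V → (RKle U V ↔ RBle U V)) := by
  constructor
  · rintro U V ⟨f, _, hf⟩
    exact ⟨f, hf⟩
  · rintro U V hU hV
    constructor
    · rintro ⟨f, hf⟩
      obtain ⟨A, hAV, hA⟩ := hV.2 f
      classical
      rcases hA with hfin | ⟨c, hc⟩
      · set g : ℕ → ℕ := fun x => if x ∈ A then f x else x with hg
        refine ⟨g, ?_, ?_⟩
        · intro n
          have hsub : g ⁻¹' {n} ⊆ (A ∩ f ⁻¹' {n}) ∪ {n} := by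
            intro x hx
            simp only [Set.mem_preimage, Set.mem_singleton_iff, hg] at hx
            by_cases h : x ∈ A
            · exact Or.inl ⟨h, by simpa [h] using hx⟩
            · exact Or.inr (by simpa [h] using hx)
          exact ((hfin n).union (Set.finite_singleton n)).subset hsub
        · intro a
          rw [hf a]
          have hag : f ⁻¹' a ∩ A = g ⁻¹' a ∩ A := by
            ext x
            constructor
            · rintro ⟨hx, hxA⟩
              exact ⟨by simp [hg, hxA, Set.mem_preimage] at hx ⊢; exact hx, hxA⟩
            · rintro ⟨hx, hxA⟩
              exact ⟨by simp [hg, hxA, Set.mem_preimage] at hx ⊢; exact hx, hxA⟩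
          constructor
          · intro h
            have := V.toFilter.inter_mem h hAV
            rw [hag] at this
            exact Filter.mem_of_superset this Set.inter_subset_left
          · intro h
            have := V.toFilter.inter_mem h hAV
            rw [← hag] at this
            exact Filter.mem_of_superset this Set.inter_subset_left
      · exfalso
        have h1 : ({c} : Set ℕ) ∈ U :=
          (hf {c}).2 (Filter.mem_of_superset hAV (fun x hx => hc x hx))
        have h2 : ({c} : Set ℕ)ᶜ ∈ U :=
          hU.1 ((Set.finite_singleton c).compl_mem_cofinite)
        have := U.toFilter.inter_mem h1 h2
        simp at this
    · rintro ⟨f, _, hf⟩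
      exact ⟨f, hf⟩
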